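/- arXiv:quant-ph/0304179 — 3 statements merged into one kernel-verified Lean document; each statement's English description precedes it below -/
import Mathlib

section
/- Let ρ1, ρ2 be density matrices on a finite-dimensional complex inner product space, with a priori probabilities p1, p2 ≥ 0, p1 + p2 = 1. Let H∩ = support(ρ1) ∩ support(ρ2), let H' be the orthogonal complement of H∩, let Π' be the orthogonal projection onto H', and set N_i = Tr(ρ_i Π') for i = 1, 2. Then every USD POVM (F1, F2, F?) for (ρ1, ρ2) has failure probability Q = p1 Tr(ρ1 F?) + p2 Tr(ρ2 F?) ≥ (1 − N1) p1 + (1 − N2) p2. -/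
open Matrix ComplexOrder

noncomputable section

abbrev Mat (n : ℕ) := Matrix (Fin n) (Fin n) ℂ

/-- The support (range) of a matrix, viewed as an operator on Euclidean space. -/
def MatSupport {n : ℕ} (A : Mat n) : Submodule ℂ (EuclideanSpace ℂ (Fin n)) :=
  LinearMap.range (Matrix.toEuclideanLin A)

/-- The matrix of the orthogonal projection onto a subspace of Euclidean space. -/
def projMat {n : ℕ} (K : Submodule ℂ (EuclideanSpace ℂ (Fin n))) : Mat n :=
  Matrix.toEuclideanLin.symm (K.subtype ∘ₗ K.orthogonalProjectionOnto.toLinearMap)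

/-- A density matrix: positive semidefinite (hence Hermitian) with trace one. -/
def IsDensity {n : ℕ} (ρ : Mat n) : Prop := ρ.PosSemidef ∧ ρ.trace = 1

/-- A USD POVM for the pair (ρ1, ρ2). -/
def IsUSD {n : ℕ} (ρ1 ρ2 F1 F2 Fq : Mat n) : Prop :=
  F1.PosSemidef ∧ F2.PosSemidef ∧ Fq.PosSemidef ∧ F1 + F2 + Fq = 1 ∧
  (ρ1 * F2).trace = 0 ∧ (ρ2 * F1).trace = 0

/-- Failure probability of a USD POVM with inconclusive element `Fq`. -/
def failQ {n : ℕ} (p1 p2 : ℝ) (ρ1 ρ2 Fq : Mat n) : ℝ :=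
  p1 * ((ρ1 * Fq).trace).re + p2 * ((ρ2 * Fq).trace).re




lemma trace_conjT {n : ℕ} (M : Mat n) :
    (Mᴴ * M).trace = (∑ j, ∑ i, Complex.normSq (M i j) : ℝ) := by
  simp only [Matrix.trace, Matrix.diag, Matrix.mul_apply, Matrix.conjTranspose_apply]
  push_cast
  congr 1; ext j; congr 1; ext i
  rw [Complex.normSq_eq_conj_mul_self]; rfl

open scoped MatrixOrder in
def Matrix.PosSemidef.sqrt {n : ℕ} {A : Mat n} (_ : A.PosSemidef) : Mat n := CFC.sqrt A

open scoped MatrixOrder in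
lemma Matrix.PosSemidef.posSemidef_sqrt {n : ℕ} {A : Mat n} (hA : A.PosSemidef) :
    hA.sqrt.PosSemidef :=
  Matrix.nonneg_iff_posSemidef.mp (CFC.sqrt_nonneg A)

open scoped MatrixOrder in
lemma Matrix.PosSemidef.sqrt_mul_self {n : ℕ} {A : Mat n} (hA : A.PosSemidef) :
    hA.sqrt * hA.sqrt = A :=
  CFC.sqrt_mul_sqrt_self A (Matrix.nonneg_iff_posSemidef.mpr hA)

lemma trace_psd_key {n : ℕ} {A B : Mat n} (hA : A.PosSemidef) (hB : B.PosSemidef) :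
    (A * B).trace = ((hA.sqrt * hB.sqrt)ᴴ * (hA.sqrt * hB.sqrt)).trace := by
  rw [Matrix.conjTranspose_mul, hA.posSemidef_sqrt.1.eq, hB.posSemidef_sqrt.1.eq]
  calc (A*B).trace = (A * hB.sqrt * hB.sqrt).trace := by
        rw [Matrix.mul_assoc, hB.sqrt_mul_self]
    _ = (hB.sqrt * (A * hB.sqrt)).trace := by rw [Matrix.trace_mul_comm]
    _ = (hB.sqrt * hA.sqrt * (hA.sqrt * hB.sqrt)).trace := by
        conv_lhs => rw [← hA.sqrt_mul_self]
        simp only [Matrix.mul_assoc]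
    _ = _ := by rw [Matrix.mul_assoc]

lemma psd_trace_nonneg {n : ℕ} {A B : Mat n} (hA : A.PosSemidef) (hB : B.PosSemidef) :
    0 ≤ ((A * B).trace).re := by
  rw [trace_psd_key hA hB, trace_conjT, Complex.ofReal_re]
  exact Finset.sum_nonneg fun j _ => Finset.sum_nonneg fun i _ => Complex.normSq_nonneg _

lemma psd_mul_eq_zero {n : ℕ} {A B : Mat n} (hA : A.PosSemidef) (hB : B.PosSemidef)
    (h : (A * B).trace = 0) : A * B = 0 := by
  rw [trace_psd_key hA hB, trace_conjT] at h
  have hsum : (∑ j, ∑ i, Complex.normSq ((hA.sqrt * hB.sqrt) i j) : ℝ) = 0 := by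
    exact_mod_cast h
  have hz : hA.sqrt * hB.sqrt = 0 := by
    ext i j
    have h1 := (Finset.sum_eq_zero_iff_of_nonneg
      (fun j _ => Finset.sum_nonneg fun i _ => Complex.normSq_nonneg _)).mp hsum j (Finset.mem_univ j)
    have h2 := (Finset.sum_eq_zero_iff_of_nonneg
      (fun i _ => Complex.normSq_nonneg _)).mp h1 i (Finset.mem_univ i)
    simpa [Complex.normSq_eq_zero] using h2
  have hAB : A * B = hA.sqrt * (hA.sqrt * hB.sqrt * hB.sqrt) := by
    conv_lhs => rw [← hA.sqrt_mul_self, ← hB.sqrt_mul_self]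
    simp only [Matrix.mul_assoc]
  rw [hAB, hz]; simp

lemma toEuclideanLin_mul_apply {n : ℕ} (A B : Mat n) (v : EuclideanSpace ℂ (Fin n)) :
    Matrix.toEuclideanLin (A * B) v = Matrix.toEuclideanLin A (Matrix.toEuclideanLin B v) := by
  simp [Matrix.toEuclideanLin_apply, Matrix.mulVec_mulVec]

lemma toEuclideanLin_one_apply {n : ℕ} (v : EuclideanSpace ℂ (Fin n)) :
    Matrix.toEuclideanLin (1 : Mat n) v = v := by
  simp [Matrix.toEuclideanLin_apply]

lemma projMat_apply {n : ℕ} (K : Submodule ℂ (EuclideanSpace ℂ (Fin n)))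
    (v : EuclideanSpace ℂ (Fin n)) :
    Matrix.toEuclideanLin (projMat K) v = (K.orthogonalProjectionOnto v : EuclideanSpace ℂ (Fin n)) := by
  rw [projMat, LinearEquiv.apply_symm_apply]; rfl

lemma projMat_hermitian {n : ℕ} (K : Submodule ℂ (EuclideanSpace ℂ (Fin n))) :
    (projMat K).IsHermitian := by
  rw [Matrix.isHermitian_iff_isSymmetric]
  rw [projMat, LinearEquiv.apply_symm_apply]
  intro x y
  simpa using K.starProjection_isSymmetric x y

/-- The failure probability of any USD POVM is at least
`(1 − N1)·p1 + (1 − N2)·p2`, where `Nᵢ = Tr(ρᵢ P')` and `P'` projects onto the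
orthogonal complement of the common subspace `support(ρ1) ∩ support(ρ2)`. -/
theorem usd_failure_lower_bound {n : ℕ} (ρ1 ρ2 : Mat n)
    (h1 : IsDensity ρ1) (h2 : IsDensity ρ2)
    (p1 p2 : ℝ) (hp1 : 0 ≤ p1) (hp2 : 0 ≤ p2) (hp : p1 + p2 = 1)
    (P' : Mat n) (hP' : P' = projMat ((MatSupport ρ1 ⊓ MatSupport ρ2)ᗮ))
    (N1 N2 : ℝ) (hN1 : N1 = ((ρ1 * P').trace).re) (hN2 : N2 = ((ρ2 * P').trace).re)
    (F1 F2 Fq : Mat n) (hUSD : IsUSD ρ1 ρ2 F1 F2 Fq) :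
    (1 - N1) * p1 + (1 - N2) * p2 ≤ failQ p1 p2 ρ1 ρ2 Fq := by
  obtain ⟨hF1, hF2, hFq, hsum, htr1, htr2⟩ := hUSD
  set K : Submodule ℂ (EuclideanSpace ℂ (Fin n)) := MatSupport ρ1 ⊓ MatSupport ρ2 with hK
  -- F1 and F2 annihilate the common support
  have h2F1 : ρ2 * F1 = 0 := psd_mul_eq_zero h2.1 hF1 htr2
  have h1F2 : ρ1 * F2 = 0 := psd_mul_eq_zero h1.1 hF2 htr1
  have hF1ρ2 : F1 * ρ2 = 0 := by
    have := congrArg Matrix.conjTranspose h2F1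
    simpa [Matrix.conjTranspose_mul, hF1.1.eq, h2.1.1.eq] using this
  have hF2ρ1 : F2 * ρ1 = 0 := by
    have := congrArg Matrix.conjTranspose h1F2
    simpa [Matrix.conjTranspose_mul, hF2.1.eq, h1.1.1.eq] using this
  -- Fq acts as identity on K
  have hFqK : ∀ x ∈ K, Matrix.toEuclideanLin Fq x = x := by
    intro x hx
    obtain ⟨y1, hy1⟩ := hx.1
    obtain ⟨y2, hy2⟩ := hx.2
    have hF1x : Matrix.toEuclideanLin F1 x = 0 := by
      rw [← hy2, ← toEuclideanLin_mul_apply, hF1ρ2]; simp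
    have hF2x : Matrix.toEuclideanLin F2 x = 0 := by
      rw [← hy1, ← toEuclideanLin_mul_apply, hF2ρ1]; simp
    have := congrArg (fun M => Matrix.toEuclideanLin M x) hsum
    simp only [map_add, LinearMap.add_apply, toEuclideanLin_one_apply, hF1x, hF2x] at this
    simpa using this
  -- the projection onto K, as 1 - P'
  set Pc : Mat n := 1 - P' with hPcdef
  have hPc_apply : ∀ x, Matrix.toEuclideanLin Pc x
      = x - (Kᗮ.orthogonalProjectionOnto x : EuclideanSpace ℂ (Fin n)) := by
    intro x
    rw [hPcdef, map_sub, LinearMap.sub_apply, toEuclideanLin_one_apply, hP', projMat_apply]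
  have hPcK : ∀ x, Matrix.toEuclideanLin Pc x ∈ K := by
    intro x
    rw [hPc_apply]
    have h := K.starProjection_add_starProjection_orthogonal x
    have : x - (Kᗮ.orthogonalProjectionOnto x : EuclideanSpace ℂ (Fin n))
        = (K.orthogonalProjectionOnto x : EuclideanSpace ℂ (Fin n)) := by
      rw [sub_eq_iff_eq_add]; exact h.symm
    rw [this]; exact Submodule.coe_mem _
  have hPcfix : ∀ x ∈ K, Matrix.toEuclideanLin Pc x = x := by
    intro x hx
    rw [hPc_apply, Submodule.orthogonalProjectionOnto_orthogonal_apply_eq_zero hx]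
    simp
  have hFqPc : Fq * Pc = Pc := by
    apply Matrix.toEuclideanLin.injective
    refine LinearMap.ext fun x => ?_
    rw [toEuclideanLin_mul_apply]
    exact hFqK _ (hPcK x)
  have hPcPc : Pc * Pc = Pc := by
    apply Matrix.toEuclideanLin.injective
    refine LinearMap.ext fun x => ?_
    rw [toEuclideanLin_mul_apply]
    exact hPcfix _ (hPcK x)
  have hPcH : Pc.IsHermitian := by
    rw [hPcdef, hP']
    exact Matrix.isHermitian_one.sub (projMat_hermitian _)
  have hPcFq : Pc * Fq = Pc := by
    have := congrArg Matrix.conjTranspose hFqPc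
    simpa [Matrix.conjTranspose_mul, hPcH.eq, hFq.1.eq] using this
  -- Fq - Pc is PSD
  have hkey : Fq - Pc = (1 - Pc) * Fq * (1 - Pc)ᴴ := by
    rw [Matrix.conjTranspose_sub, Matrix.conjTranspose_one, hPcH.eq]
    simp only [Matrix.sub_mul, Matrix.mul_sub, Matrix.one_mul, Matrix.mul_one,
      hFqPc, hPcFq, hPcPc]
    abel
  have hsub : (Fq - Pc).PosSemidef := hkey ▸ hFq.mul_mul_conjTranspose_same (1 - Pc)
  -- trace bounds
  have bound : ∀ (ρ : Mat n) (N : ℝ), IsDensity ρ → N = ((ρ * P').trace).re →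
      1 - N ≤ ((ρ * Fq).trace).re := by
    intro ρ N hρ hN
    have hnn := psd_trace_nonneg hρ.1 hsub
    have hPctr : (ρ * Pc).trace = 1 - (ρ * P').trace := by
      rw [hPcdef, Matrix.mul_sub, Matrix.mul_one, Matrix.trace_sub, hρ.2]
    rw [Matrix.mul_sub, Matrix.trace_sub] at hnn
    rw [hPctr] at hnn
    have : 0 ≤ ((ρ * Fq).trace).re - (1 - N) := by
      rw [hN]; simpa [Complex.sub_re, Complex.one_re] using hnn
    linarith
  have e1 := bound ρ1 N1 h1 hN1
  have e2 := bound ρ2 N2 h2 hN2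
  have m1 := mul_le_mul_of_nonneg_left e1 hp1
  have m2 := mul_le_mul_of_nonneg_left e2 hp2
  unfold failQ
  linarith
end
end

section
/- Let ρ1, ρ2 be density matrices on a finite-dimensional complex inner product space, with a priori probabilities p1, p2 ≥ 0, p1 + p2 = 1. Let H∩ = support(ρ1) ∩ support(ρ2), let Π∩ and Π' be the orthogonal projections onto H∩ and its orthogonal complement H', assume N_i = Tr(ρ_i Π') > 0 for i = 1, 2, and set ρ'_i = Π' ρ_i Π' / N_i, N = N1 p1 + N2 p2, p'_i = N_i p_i / N. Suppose (G1, G2, G?) are positive semidefinite Hermitian operators whose supports are contained in H', with G1 + G2 + G? = Π', Tr(ρ'1 G2) = 0 and Tr(ρ'2 G1) = 0. Then (G1, G2, G? + Π∩) is a USD POVM for (ρ1, ρ2) whose failure probability equals (1 − N1) p1 + (1 − N2) p2 + N·(p'1 Tr(ρ'1 G?) + p'2 Tr(ρ'2 G?)). -/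
open Matrix ComplexOrder

noncomputable section

variable {n : ℕ}

lemma toEuclideanLin_mul (A B : Mat n) :
    Matrix.toEuclideanLin (A * B) = (Matrix.toEuclideanLin A) ∘ₗ (Matrix.toEuclideanLin B) := by
  rw [Matrix.toEuclideanLin_eq_toLin, Matrix.toLin_mul _ (PiLp.basisFun 2 ℂ (Fin n)) _]

lemma toEuclideanLin_one : Matrix.toEuclideanLin (1 : Mat n) = LinearMap.id := by
  rw [Matrix.toEuclideanLin_eq_toLin, Matrix.toLin_one]

lemma toEuclideanLin_projMat (K : Submodule ℂ (EuclideanSpace ℂ (Fin n))) :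
    Matrix.toEuclideanLin (projMat K) = K.subtype ∘ₗ K.orthogonalProjectionOnto.toLinearMap := by
  simp [projMat]

lemma projMat_isHermitian (K : Submodule ℂ (EuclideanSpace ℂ (Fin n))) :
    (projMat K).IsHermitian := by
  rw [Matrix.isHermitian_iff_isSymmetric, toEuclideanLin_projMat]
  intro x y
  exact Submodule.inner_starProjection_left_eq_right K x y

lemma projMat_idem (K : Submodule ℂ (EuclideanSpace ℂ (Fin n))) :
    projMat K * projMat K = projMat K := by
  apply Matrix.toEuclideanLin.injective
  rw [toEuclideanLin_mul, toEuclideanLin_projMat]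
  ext x
  simp [Submodule.orthogonalProjectionOnto_mem_subspace_eq_self, Submodule.starProjection_eq_self_iff.mpr (K.starProjection_apply_mem x)]

lemma projMat_posSemidef (K : Submodule ℂ (EuclideanSpace ℂ (Fin n))) :
    (projMat K).PosSemidef := by
  have h := Matrix.posSemidef_conjTranspose_mul_self (projMat K)
  rwa [(projMat_isHermitian K).eq, projMat_idem] at h

lemma projMat_add_orth (K : Submodule ℂ (EuclideanSpace ℂ (Fin n))) :
    projMat K + projMat Kᗮ = 1 := by
  apply Matrix.toEuclideanLin.injective
  rw [map_add, toEuclideanLin_projMat, toEuclideanLin_projMat, toEuclideanLin_one]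
  ext x
  simpa using Submodule.starProjection_add_starProjection_orthogonal K x

lemma projMat_mul_eq (K : Submodule ℂ (EuclideanSpace ℂ (Fin n))) (G : Mat n)
    (h : MatSupport G ≤ K) : projMat K * G = G := by
  apply Matrix.toEuclideanLin.injective
  rw [toEuclideanLin_mul, toEuclideanLin_projMat]
  refine LinearMap.ext fun x => ?_
  have hx : Matrix.toEuclideanLin G x ∈ K := h ⟨x, rfl⟩
  simpa using congrArg (Subtype.val)
    (Submodule.orthogonalProjectionOnto_mem_subspace_eq_self (K := K) ⟨_, hx⟩)

lemma mul_projMat_eq (K : Submodule ℂ (EuclideanSpace ℂ (Fin n))) (G : Mat n)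
    (hG : G.IsHermitian) (h : MatSupport G ≤ K) : G * projMat K = G := by
  have h1 : (G * projMat K)ᴴ = G := by
    rw [Matrix.conjTranspose_mul, (projMat_isHermitian K).eq, hG.eq, projMat_mul_eq K G h]
  calc G * projMat K = ((G * projMat K)ᴴ)ᴴ := (Matrix.conjTranspose_conjTranspose _).symm
  _ = Gᴴ := by rw [h1]
  _ = G := hG.eq

lemma trace_sandwich (K : Submodule ℂ (EuclideanSpace ℂ (Fin n))) (ρ G : Mat n)
    (hG : G.IsHermitian) (h : MatSupport G ≤ K) :
    (projMat K * ρ * projMat K * G).trace = (ρ * G).trace := by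
  rw [mul_assoc (projMat K * ρ), projMat_mul_eq K G h, mul_assoc, Matrix.trace_mul_comm,
    mul_assoc ρ G, mul_projMat_eq K G hG h]

/-- Any USD POVM `(G1, G2, Gq)` for the reduced problem `(ρ1', ρ2')`,
supported on the orthogonal complement `H'` of the common subspace and summing to the
projection `P'` onto `H'`, lifts to the USD POVM `(G1, G2, Gq + Π∩)` for `(ρ1, ρ2)`,
with failure probability `(1 − N1) p1 + (1 − N2) p2 + N·Q'`. -/
theorem usd_povm_lift_common_subspace {n : ℕ} (ρ1 ρ2 : Mat n)
    (h1 : IsDensity ρ1) (h2 : IsDensity ρ2)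
    (p1 p2 : ℝ) (hp1 : 0 ≤ p1) (hp2 : 0 ≤ p2) (hp : p1 + p2 = 1)
    (Hcap : Submodule ℂ (EuclideanSpace ℂ (Fin n)))
    (hHcap : Hcap = MatSupport ρ1 ⊓ MatSupport ρ2)
    (Pcap P' : Mat n) (hPcap : Pcap = projMat Hcap) (hP' : P' = projMat Hcapᗮ)
    (N1 N2 : ℝ) (hN1 : N1 = ((ρ1 * P').trace).re) (hN2 : N2 = ((ρ2 * P').trace).re)
    (hN1pos : 0 < N1) (hN2pos : 0 < N2)
    (ρ1' ρ2' : Mat n)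
    (hρ1' : ρ1' = ((N1 : ℂ))⁻¹ • (P' * ρ1 * P'))
    (hρ2' : ρ2' = ((N2 : ℂ))⁻¹ • (P' * ρ2 * P'))
    (N : ℝ) (hN : N = N1 * p1 + N2 * p2)
    (p1' p2' : ℝ) (hp1' : p1' = N1 * p1 / N) (hp2' : p2' = N2 * p2 / N)
    (G1 G2 Gq : Mat n)
    (hG1 : G1.PosSemidef) (hG2 : G2.PosSemidef) (hGq : Gq.PosSemidef)
    (hG1supp : MatSupport G1 ≤ Hcapᗮ) (hG2supp : MatSupport G2 ≤ Hcapᗮ)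
    (hGqsupp : MatSupport Gq ≤ Hcapᗮ)
    (hsum : G1 + G2 + Gq = P')
    (htr1 : (ρ1' * G2).trace = 0) (htr2 : (ρ2' * G1).trace = 0) :
    IsUSD ρ1 ρ2 G1 G2 (Gq + Pcap) ∧
    failQ p1 p2 ρ1 ρ2 (Gq + Pcap) =
      (1 - N1) * p1 + (1 - N2) * p2 + N * failQ p1' p2' ρ1' ρ2' Gq := by
  have hN1ne : (N1 : ℂ) ≠ 0 := by exact_mod_cast hN1pos.ne'
  have hN2ne : (N2 : ℂ) ≠ 0 := by exact_mod_cast hN2pos.ne'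
  have hN1ne' : N1 ≠ 0 := hN1pos.ne'
  have hN2ne' : N2 ≠ 0 := hN2pos.ne'
  have hNpos : 0 < N := by
    rw [hN]
    rcases hp1.lt_or_eq with h | h
    · nlinarith [mul_nonneg hN2pos.le hp2, mul_pos hN1pos h]
    · have hq : p2 = 1 := by linarith
      rw [← h, hq]; simpa using hN2pos
  have hNne : N ≠ 0 := hNpos.ne'
  have hPsum : Pcap + P' = 1 := by rw [hPcap, hP']; exact projMat_add_orth Hcap
  have hPcapPSD : Pcap.PosSemidef := by rw [hPcap]; exact projMat_posSemidef Hcap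
  have hsand1 : (P' * ρ1 * P' * G2).trace = (ρ1 * G2).trace := by
    rw [hP']; exact trace_sandwich _ _ _ hG2.1 hG2supp
  have hsand2 : (P' * ρ2 * P' * G1).trace = (ρ2 * G1).trace := by
    rw [hP']; exact trace_sandwich _ _ _ hG1.1 hG1supp
  have hsandq1 : (P' * ρ1 * P' * Gq).trace = (ρ1 * Gq).trace := by
    rw [hP']; exact trace_sandwich _ _ _ hGq.1 hGqsupp
  have hsandq2 : (P' * ρ2 * P' * Gq).trace = (ρ2 * Gq).trace := by
    rw [hP']; exact trace_sandwich _ _ _ hGq.1 hGqsupp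
  have htr1' : (ρ1 * G2).trace = 0 := by
    rw [hρ1', smul_mul_assoc, Matrix.trace_smul, hsand1, smul_eq_mul] at htr1
    exact (mul_eq_zero.mp htr1).resolve_left (inv_ne_zero hN1ne)
  have htr2' : (ρ2 * G1).trace = 0 := by
    rw [hρ2', smul_mul_assoc, Matrix.trace_smul, hsand2, smul_eq_mul] at htr2
    exact (mul_eq_zero.mp htr2).resolve_left (inv_ne_zero hN2ne)
  have hsum' : G1 + G2 + (Gq + Pcap) = 1 := by
    calc G1 + G2 + (Gq + Pcap) = (G1 + G2 + Gq) + Pcap := by abel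
    _ = P' + Pcap := by rw [hsum]
    _ = 1 := by rw [add_comm, hPsum]
  refine ⟨⟨hG1, hG2, hGq.add hPcapPSD, hsum', htr1', htr2'⟩, ?_⟩
  have hPcapEq : Pcap = 1 - P' := eq_sub_of_add_eq hPsum
  have hT1 : ((ρ1 * (Gq + Pcap)).trace).re = ((ρ1 * Gq).trace).re + (1 - N1) := by
    rw [mul_add, Matrix.trace_add, hPcapEq, mul_sub, mul_one, Matrix.trace_sub, h1.2]
    simp [hN1]
  have hT2 : ((ρ2 * (Gq + Pcap)).trace).re = ((ρ2 * Gq).trace).re + (1 - N2) := by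
    rw [mul_add, Matrix.trace_add, hPcapEq, mul_sub, mul_one, Matrix.trace_sub, h2.2]
    simp [hN2]
  have hQ1 : ((ρ1' * Gq).trace).re = N1⁻¹ * ((ρ1 * Gq).trace).re := by
    rw [hρ1', smul_mul_assoc, Matrix.trace_smul, hsandq1, smul_eq_mul,
      ← Complex.ofReal_inv, Complex.re_ofReal_mul]
  have hQ2 : ((ρ2' * Gq).trace).re = N2⁻¹ * ((ρ2 * Gq).trace).re := by
    rw [hρ2', smul_mul_assoc, Matrix.trace_smul, hsandq2, smul_eq_mul,
      ← Complex.ofReal_inv, Complex.re_ofReal_mul]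
  simp only [failQ, hT1, hT2, hQ1, hQ2, hp1', hp2']
  field_simp
  ring
end
end

section
/- Let U and V be subspaces of a finite-dimensional complex inner product space such that U ∩ V = {0}, U⊥ ∩ V = {0} and V⊥ ∩ U = {0}. Then dim U = dim V, and hence dim(U + V) = 2·dim U. In particular, if two density matrices have supports U and V satisfying these conditions, the fully reduced USD problem involves two density matrices of the same rank r in a space of dimension 2r. -/
/-!
A subspace `V` meeting `Kᗮ` trivially has `dim V ≤ dim E - dim Kᗮ = dim K`. Applied with `K = U`
and with the roles swapped this gives `dim U = dim V`, and `U ∩ V = 0` makes `U + V` direct.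
-/

open Module

theorem Submodule.finrank_le_of_orthogonal_inf_eq_bot {𝕜 E : Type*} [RCLike 𝕜]
    [NormedAddCommGroup E] [InnerProductSpace 𝕜 E] [FiniteDimensional 𝕜 E]
    {K V : Submodule 𝕜 E} (h : Kᗮ ⊓ V = ⊥) : finrank 𝕜 V ≤ finrank 𝕜 K := by
  have hdisj := Submodule.finrank_add_finrank_le_of_disjoint (disjoint_iff.mpr h)
  have hcompl := K.finrank_add_finrank_orthogonal
  omega

theorem Submodule.finrank_sup_of_inf_eq_bot {K E : Type*} [DivisionRing K] [AddCommGroup E]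
    [Module K E] {U V : Submodule K E} [FiniteDimensional K U] [FiniteDimensional K V]
    (h : U ⊓ V = ⊥) : finrank K ↥(U ⊔ V) = finrank K U + finrank K V := by
  rw [← Submodule.finrank_sup_add_finrank_inf_eq, h, finrank_bot, add_zero]

/-- If `U ∩ V = {0}`, `Uᗮ ∩ V = {0}` and `Vᗮ ∩ U = {0}`, then
`dim U = dim V` and `dim (U + V) = 2 · dim U`: the fully reduced USD problem involves
two density matrices of the same rank `r` in a space of dimension `2r`. -/
theorem reduced_supports_same_rank {E : Type*} [NormedAddCommGroup E]
    [InnerProductSpace ℂ E] [FiniteDimensional ℂ E] (U V : Submodule ℂ E)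
    (hUV : U ⊓ V = ⊥) (hU : Uᗮ ⊓ V = ⊥) (hV : Vᗮ ⊓ U = ⊥) :
    Module.finrank ℂ U = Module.finrank ℂ V ∧
    Module.finrank ℂ ↥(U ⊔ V) = 2 * Module.finrank ℂ U := by
  have hdim : finrank ℂ U = finrank ℂ V :=
    le_antisymm (Submodule.finrank_le_of_orthogonal_inf_eq_bot hV)
      (Submodule.finrank_le_of_orthogonal_inf_eq_bot hU)
  refine ⟨hdim, ?_⟩
  rw [Submodule.finrank_sup_of_inf_eq_bot hUV, ← hdim, two_mul]
end
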